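/- arXiv:2208.10298 — 5 statements merged into one kernel-verified Lean document; each statement's English description precedes it below -/
import Mathlib

section
/- For block size b dividing n and any permutation δ ∈ S_n, the number of permutations π ∈ S_n with d_ee(π,δ) ≤ r satisfies |{π : d_ee(π,δ) ≤ r}| ≤ C(n,r)·r!·b^{n−r}. -/
/-!
A permutation `π` with `d_ee(π, δ) ≤ r` agrees in block with `δ` outside some `r`-set `T` of
positions, and there are `C(n, r)` such sets. For fixed `T`, the values of `π` off `T` each lie
in a block of size `b`, giving at most `b^(n-r)` choices; two permutations with the same values
off `T` differ by a permutation of `T`, so each choice is extended in at most `r!` ways.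
-/

/-- Block index (1-based) of 1-based position `i+1` for block size `b`. -/
def blk (b : ℕ) {n : ℕ} (i : Fin n) : ℕ := (i.val + b) / b

/-- External errors metric. -/
def dEE (b : ℕ) {n : ℕ} (π δ : Equiv.Perm (Fin n)) : ℕ :=
  (Finset.univ.filter (fun i => blk b (π i) ≠ blk b (δ i))).card

open Finset Equiv

namespace Equiv.Perm

variable {α : Type*} [Fintype α] [DecidableEq α]

theorem card_filter_forall_notMem_apply_eq (σ : Perm α) (T : Finset α) :
    #{π : Perm α | ∀ i ∉ T, π i = σ i} = (#T).factorial := by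
  have hfix : #{π : Perm α | ∀ i ∉ T, π i = σ i} = #{g : Perm α | ∀ i ∉ T, g i = i} := by
    refine card_nbij' (σ⁻¹ * ·) (σ * ·) ?_ ?_ ?_ ?_ <;> intro π <;> simp [Equiv.symm_apply_eq]
  rw [hfix, ← Fintype.card_subtype, ← Fintype.card_congr (Perm.subtypeEquivSubtypePerm (· ∈ T)),
    Fintype.card_perm, Fintype.card_coe]

theorem card_filter_le_factorial_of_forall_notMem_eq (T : Finset α) (p : Perm α → Prop)
    [DecidablePred p] (hp : ∀ π σ, p π → p σ → ∀ i ∉ T, π i = σ i) :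
    #{π : Perm α | p π} ≤ (#T).factorial := by
  obtain ⟨σ, hσ⟩ | hempty := em (∃ σ, p σ)
  · rw [← card_filter_forall_notMem_apply_eq σ T]
    exact card_le_card fun π hπ => by simpa using hp π σ (by simpa using hπ) hσ
  · simp [filter_false_of_mem fun π _ hπ => hempty ⟨π, hπ⟩]

variable {β : Type*} [DecidableEq β]

theorem card_filter_forall_notMem_comp_eq_le (f : α → β) {b : ℕ} (hf : ∀ y, #{x | f x = y} ≤ b)
    (δ : Perm α) (T : Finset α) :
    #{π : Perm α | ∀ i ∉ T, f (π i) = f (δ i)} ≤ (#T).factorial * b ^ #Tᶜ := by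
  let fiber : ↥Tᶜ → Finset α := fun i => {x | f x = f (δ i)}
  calc #{π : Perm α | ∀ i ∉ T, f (π i) = f (δ i)}
      ≤ (#T).factorial * #(Fintype.piFinset fiber) := by
        refine card_le_mul_card_image_of_maps_to (f := fun π (i : ↥Tᶜ) => π i) ?_ _ ?_
        · intro π hπ
          simp only [mem_filter, mem_univ, true_and] at hπ
          simpa [fiber] using fun i hi => hπ i (mem_compl.mp hi)
        · intro g _
          rw [filter_filter]
          refine card_filter_le_factorial_of_forall_notMem_eq T _ fun π σ hπ hσ i hi => ?_
          exact congrFun (hπ.2.trans hσ.2.symm) ⟨i, mem_compl.mpr hi⟩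
    _ ≤ (#T).factorial * b ^ #Tᶜ := by
        gcongr
        rw [Fintype.card_piFinset]
        simpa using prod_le_pow_card univ (fun i => #(fiber i)) b fun i _ => hf _

theorem card_filter_card_comp_ne_le (f : α → β) {b : ℕ} (hf : ∀ y, #{x | f x = y} ≤ b)
    (δ : Perm α) {r : ℕ} (hr : r ≤ Fintype.card α) :
    #{π : Perm α | #{i | f (π i) ≠ f (δ i)} ≤ r} ≤
      (Fintype.card α).choose r * r.factorial * b ^ (Fintype.card α - r) := by
  have hcover : ({π : Perm α | #{i | f (π i) ≠ f (δ i)} ≤ r} : Finset (Perm α)) ⊆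
      (powersetCard r univ).biUnion fun T => {π : Perm α | ∀ i ∉ T, f (π i) = f (δ i)} := by
    intro π hπ
    obtain ⟨T, hmismatch, hT⟩ := exists_superset_card_eq (mem_filter.mp hπ).2 (by simpa using hr)
    simp only [mem_biUnion, mem_powersetCard, mem_filter, mem_univ, true_and]
    exact ⟨T, ⟨subset_univ T, hT⟩, fun i hi => not_not.mp fun hne => hi (hmismatch (by simpa))⟩
  calc _ ≤ ∑ T ∈ powersetCard r univ, #{π : Perm α | ∀ i ∉ T, f (π i) = f (δ i)} :=
        (card_le_card hcover).trans card_biUnion_le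
    _ ≤ ∑ T ∈ powersetCard r (univ : Finset α), r.factorial * b ^ (Fintype.card α - r) := by
        refine sum_le_sum fun T hT => ?_
        have hT := (mem_powersetCard.mp hT).2
        simpa [hT, card_compl] using card_filter_forall_notMem_comp_eq_le f hf δ T
    _ = _ := by simp [mul_assoc]

end Equiv.Perm

theorem card_filter_blk_eq_le {b : ℕ} (hb : 0 < b) (n c : ℕ) :
    #{j : Fin n | blk b j = c} ≤ b := by
  refine (card_le_card_of_injOn (fun j : Fin n => (j : ℕ) % b)
    (fun j _ => by simpa using Nat.mod_lt _ hb) fun i hi j hj hij => ?_).trans (card_range b).le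
  simp only [coe_filter, mem_univ, true_and, Set.mem_ofPred_eq, blk,
    Nat.add_div_right _ hb] at hi hj
  have : (i : ℕ) / b = j / b := by omega
  exact Fin.ext (by
    rw [← Nat.div_add_mod i b, ← Nat.div_add_mod j b, this, show (i : ℕ) % b = j % b from hij])

theorem ball_dEE_card_le_general (n b r : ℕ) (hb : 0 < b) (hr : r ≤ n)
    (δ : Equiv.Perm (Fin n)) :
    (Finset.univ.filter (fun π : Equiv.Perm (Fin n) => dEE b π δ ≤ r)).card ≤
      n.choose r * r.factorial * b ^ (n - r) := by
  simpa [dEE] using Perm.card_filter_card_comp_ne_le (blk b) (card_filter_blk_eq_le hb n) δ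
    (r := r) (by simpa using hr)

theorem ball_dEE_card_le (n b r : ℕ) (hb : 0 < b) (hbn : b ∣ n) (hr : r ≤ n)
    (δ : Equiv.Perm (Fin n)) :
    (Finset.univ.filter (fun π : Equiv.Perm (Fin n) => dEE b π δ ≤ r)).card ≤
      n.choose r * r.factorial * b ^ (n - r) :=
  ball_dEE_card_le_general n b r hb hr δ
end

section
/- For block size b and any permutation π ∈ S_n, and any nonnegative integer r, the number of permutations δ with d_esp(π,δ) ≤ r satisfies |{δ ∈ S_n : d_esp(π,δ) ≤ r}| ≤ (2b)^n · C(n+r, r). -/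
/-- External Spearman's footrule metric. -/
def dESP (b : ℕ) {n : ℕ} (π δ : Equiv.Perm (Fin n)) : ℤ :=
  ∑ i : Fin n, |(blk b (π i) : ℤ) - (blk b (δ i) : ℤ)|

/-!
Encode `δ` position by position: the offset of `δ i` inside its block together with the side of
`blk (π i)` on which `blk (δ i)` lies (`2b` possibilities), and the block displacement
`|blk (π i) - blk (δ i)|`. This encoding is injective, and on the ball of radius `r` the
displacement vectors lie in `ℕⁿ` with sum at most `r`; appending the slack `r - ∑` turns them into
multisets of size `r` on `n + 1` letters, of which there are `C(n+r, r)`.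
-/
open Finset

variable {n : ℕ}

theorem card_le_choose_of_forall_sum_le {r : ℕ} {S : Finset (Fin n → ℕ)}
    (hS : ∀ a ∈ S, ∑ i, a i ≤ r) : #S ≤ (n + r).choose r := by
  calc #S ≤ #(piAntidiag (univ : Finset (Fin (n + 1))) r) := by
        refine card_le_card_of_injOn (fun a => Fin.snoc a (r - ∑ i, a i)) (fun a ha => ?_) ?_
        · refine mem_piAntidiag.2 ⟨?_, fun _ _ => mem_univ _⟩
          simp only [Fin.sum_univ_castSucc, Fin.snoc_castSucc, Fin.snoc_last]
          exact Nat.add_sub_of_le (hS a ha)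
        · intro a _ a' _ h
          exact (Fin.snoc_injective2 h).1
    _ = (n + r).choose r := by
        rw [← map_sym_eq_piAntidiag, card_map, sym_univ, card_univ, Sym.card_sym_eq_choose]
        simp [add_comm]

section Blocks

variable {b : ℕ}

theorem blk_eq_div_add_one (hb : 0 < b) (x : Fin n) : blk b x = x.val / b + 1 := by
  simp [blk, Nat.add_div_right _ hb]

theorem Fin.eq_of_blk_eq_of_mod_eq (hb : 0 < b) {x y : Fin n} (hblk : blk b x = blk b y)
    (hmod : x.val % b = y.val % b) : x = y := by
  rw [blk_eq_div_add_one hb, blk_eq_div_add_one hb] at hblk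
  ext
  rw [← Nat.div_add_mod x.val b, ← Nat.div_add_mod y.val b, Nat.add_right_cancel hblk, hmod]

def blockDisp (b : ℕ) (π δ : Equiv.Perm (Fin n)) (i : Fin n) : ℕ :=
  ((blk b (π i) : ℤ) - blk b (δ i)).natAbs

def blockCode (b : ℕ) (π δ : Equiv.Perm (Fin n)) (i : Fin n) : ℕ × Bool :=
  ((δ i).val % b, decide (blk b (δ i) ≤ blk b (π i)))

theorem dESP_eq_sum_blockDisp (π δ : Equiv.Perm (Fin n)) :
    dESP b π δ = ∑ i, (blockDisp b π δ i : ℤ) := by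
  simp [dESP, blockDisp]

theorem blockCode_mem_piFinset (hb : 0 < b) (π δ : Equiv.Perm (Fin n)) :
    blockCode b π δ ∈ Fintype.piFinset fun _ => range b ×ˢ univ := by
  simp [blockCode, Nat.mod_lt _ hb, le_or_gt]

theorem injective_blockCode_blockDisp (hb : 0 < b) (π : Equiv.Perm (Fin n)) :
    Function.Injective fun δ => (blockCode b π δ, blockDisp b π δ) := by
  intro δ δ' h
  simp only [Prod.mk.injEq, funext_iff, blockCode, blockDisp, decide_eq_decide] at h
  ext1 i
  obtain ⟨hcode, hdisp⟩ := h
  obtain ⟨hmod, hside⟩ := hcode i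
  refine Fin.eq_of_blk_eq_of_mod_eq hb ?_ hmod
  have := hdisp i
  omega

end Blocks

theorem ball_dESP_card_le (n b r : ℕ) (hb : 0 < b) (π : Equiv.Perm (Fin n)) :
    (Finset.univ.filter
        (fun δ : Equiv.Perm (Fin n) => dESP b π δ ≤ (r : ℤ))).card ≤
      (2 * b) ^ n * (n + r).choose r := by
  set ball := univ.filter fun δ : Equiv.Perm (Fin n) => dESP b π δ ≤ (r : ℤ)
  have hdisp : ∀ a ∈ ball.image (blockDisp b π), ∑ i, a i ≤ r := by
    simp only [mem_image, mem_filter, ball, dESP_eq_sum_blockDisp]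
    rintro _ ⟨δ, ⟨-, hδ⟩, rfl⟩
    exact_mod_cast hδ
  calc #ball
      ≤ #((Fintype.piFinset fun _ => range b ×ˢ univ) ×ˢ ball.image (blockDisp b π)) :=
        card_le_card_of_injOn _
          (fun δ hδ => mem_product.2 ⟨blockCode_mem_piFinset hb π δ, mem_image_of_mem _ hδ⟩)
          (injective_blockCode_blockDisp hb π).injOn
    _ ≤ (2 * b) ^ n * (n + r).choose r := by
        rw [card_product, Fintype.card_piFinset_const, card_product, card_range, card_univ,
          Fintype.card_bool, mul_comm b]
        exact Nat.mul_le_mul_left _ (card_le_choose_of_forall_sum_le hdisp)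
end

section
/- Let d be a right-invariant metric on S_n taking nonnegative integer values, and let C ⊆ S_n be a code such that the average distortion satisfies (1/n!)·Σ_{π∈S_n} d(π,C) ≤ r for an integer r ≥ 0. Then |C| ≥ n!/(|Ball(r)|·(r+1)). -/
/-!
By right-invariance every ball of radius `r` in `S_n` has `|Ball(r)|` elements, so the
permutations within distance `r` of the code number at most `|C| · |Ball(r)|`. By Markov's
inequality the remaining permutations, each at distance at least `r + 1`, make up at most a
fraction `r / (r + 1)` of `S_n`; hence `n! ≤ (r + 1) · |C| · |Ball(r)|`.
-/

open Finset

theorem Finset.card_le_card_filter_le_mul_succ_of_sum_le {ι : Type*} (s : Finset ι)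
    (f : ι → ℕ) (r : ℕ) (hsum : ∑ i ∈ s, f i ≤ r * #s) :
    #s ≤ #(s.filter (f · ≤ r)) * (r + 1) := by
  set far := s.filter (fun i => ¬ f i ≤ r)
  have hsplit : #(s.filter (f · ≤ r)) + #far = #s := card_filter_add_card_filter_not _
  have hmarkov : #far * (r + 1) ≤ ∑ i ∈ s, f i :=
    calc #far * (r + 1) = #far • (r + 1) := rfl
      _ ≤ ∑ i ∈ far, f i := card_nsmul_le_sum _ _ _ fun i hi => by
          simp only [far, mem_filter] at hi; omega
      _ ≤ ∑ i ∈ s, f i := sum_le_sum_of_subset (filter_subset _ _)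
  nlinarith

theorem Finset.card_filter_inf'_le_le_sum {ι κ α : Type*} [Fintype ι] [LinearOrder α]
    (C : Finset κ) (hC : C.Nonempty) (f : ι → κ → α) (r : α) :
    #{x | C.inf' hC (f x) ≤ r} ≤ ∑ c ∈ C, #{x | f x c ≤ r} := by
  classical
  calc #{x | C.inf' hC (f x) ≤ r} ≤ #(C.biUnion fun c => {x | f x c ≤ r}) :=
        card_le_card fun x hx => by simpa using hx
    _ ≤ ∑ c ∈ C, #{x | f x c ≤ r} := card_biUnion_le

theorem card_filter_le_eq_card_filter_le_one_of_mul_right {G α : Type*} [Group G] [Fintype G]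
    [LE α] [DecidableLE α] (d : G → G → α) (hinv : ∀ x y z : G, d (x * z) (y * z) = d x y)
    (c : G) (r : α) : #{x | d x c ≤ r} = #{x | d x 1 ≤ r} :=
  card_equiv (Equiv.mulRight c⁻¹) fun x => by
    simp [← hinv x c c⁻¹]

theorem average_distortion_code_lower_bound (n r : ℕ)
    (d : Equiv.Perm (Fin n) → Equiv.Perm (Fin n) → ℕ)
    (hinv : ∀ π δ θ : Equiv.Perm (Fin n), d (π * θ) (δ * θ) = d π δ)
    (C : Finset (Equiv.Perm (Fin n))) (hC : C.Nonempty)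
    (havg : (∑ π : Equiv.Perm (Fin n), (C.inf' hC (fun δ => d π δ) : ℝ)) /
        n.factorial ≤ r) :
    (n.factorial : ℝ) /
        ((Finset.univ.filter (fun π : Equiv.Perm (Fin n) => d π 1 ≤ r)).card * (r + 1)) ≤
      C.card := by
  set B := #{π : Equiv.Perm (Fin n) | d π 1 ≤ r}
  have hsum : ∑ π, C.inf' hC (d π) ≤ r * n.factorial := by
    rw [div_le_iff₀ (by positivity)] at havg
    exact_mod_cast havg
  have hnear : n.factorial ≤ #{π | C.inf' hC (d π) ≤ r} * (r + 1) := by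
    have := card_le_card_filter_le_mul_succ_of_sum_le univ (fun π => C.inf' hC (d π)) r
      (by simpa [Fintype.card_perm] using hsum)
    simpa [Fintype.card_perm] using this
  have hcover : #{π | C.inf' hC (d π) ≤ r} ≤ #C * B := by
    simpa [card_filter_le_eq_card_filter_le_one_of_mul_right d hinv] using
      card_filter_inf'_le_le_sum C hC d r
  refine div_le_of_le_mul₀ (by positivity) (by positivity) ?_
  calc (n.factorial : ℝ) ≤ ((#C * B * (r + 1) : ℕ) : ℝ) := by
        exact_mod_cast hnear.trans (Nat.mul_le_mul_right _ hcover)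
    _ = #C * (B * (r + 1)) := by push_cast; ring
end

section
/- If π is a permutation chosen uniformly at random from S_n and b divides n, then E[d_esp(π, id)] = (n² − b²)/(3b). -/
open Finset

lemma gauss_aux (m : ℕ) : 2 * ∑ t ∈ range m, ((m:ℤ) - t) = m * (m + 1) := by
  induction m with
  | zero => simp
  | succ m ih =>
    have e : ∀ t ∈ range m, ((m+1:ℕ):ℤ) - t = ((m:ℤ) - t) + 1 := fun t _ => by push_cast; ring
    rw [sum_range_succ, sum_congr rfl e, sum_add_distrib, sum_const, card_range, nsmul_eq_mul]
    push_cast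
    linarith

lemma absT (m : ℕ) : 3 * ∑ s ∈ range m, ∑ t ∈ range m, |(s:ℤ) - t| = m^3 - m := by
  induction m with
  | zero => simp
  | succ m ih =>
    simp only [sum_range_succ, sum_add_distrib]
    have h1 : ∀ t ∈ range m, |(t:ℤ) - m| = (m:ℤ) - t := by
      intro t ht
      have : (t:ℤ) ≤ m := by exact_mod_cast (mem_range.mp ht).le
      rw [abs_sub_comm, abs_of_nonneg (by linarith)]
    have h2 : ∀ t ∈ range m, |(m:ℤ) - t| = (m:ℤ) - t := by
      intro t ht
      have : (t:ℤ) ≤ m := by exact_mod_cast (mem_range.mp ht).le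
      rw [abs_of_nonneg (by linarith)]
    rw [sum_congr rfl h1, sum_congr rfl h2]
    have hg := gauss_aux m
    simp only [sub_self, abs_zero, add_zero]
    push_cast
    linear_combination ih + 3 * hg

lemma sum_blocks (b m : ℕ) (f : ℕ → ℤ) :
    ∑ i ∈ range (m * b), f i = ∑ s ∈ range m, ∑ r ∈ range b, f (s * b + r) := by
  induction m with
  | zero => simp
  | succ m ih =>
    rw [Nat.succ_mul, Finset.sum_range_add, ih, sum_range_succ]

lemma blkval (b s r : ℕ) (hb : 0 < b) (hr : r < b) : (s * b + r + b) / b = s + 1 := by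
  have : s * b + r + b = r + b * (s + 1) := by ring
  rw [this, Nat.add_mul_div_left _ _ hb, Nat.div_eq_of_lt hr]
  omega

lemma Ssum (b m : ℕ) (hb : 0 < b) {n : ℕ} (hnm : n = m * b) :
    ∑ i : Fin n, ∑ j : Fin n, |(blk b j : ℤ) - (blk b i : ℤ)|
      = (b:ℤ)^2 * ∑ s ∈ range m, ∑ t ∈ range m, |(s:ℤ) - t| := by
  subst hnm
  have key : ∑ i ∈ range (m*b), ∑ j ∈ range (m*b),
      |(((j + b)/b : ℕ) : ℤ) - (((i + b)/b : ℕ) : ℤ)|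
      = (b:ℤ)^2 * ∑ s ∈ range m, ∑ t ∈ range m, |(s:ℤ) - t| := by
    rw [sum_blocks]
    have inner : ∀ s r, s ∈ range m → r ∈ range b →
        ∑ j ∈ range (m*b), |(((j + b)/b : ℕ) : ℤ) - (((s*b + r + b)/b : ℕ) : ℤ)|
        = (b:ℤ) * ∑ t ∈ range m, |(t:ℤ) - s| := by
      intro s r hs hr
      rw [sum_blocks]
      rw [blkval b s r hb (mem_range.mp hr)]
      rw [Finset.mul_sum]
      refine sum_congr rfl fun t _ => ?_
      have : ∀ q ∈ range b, |(((t*b + q + b)/b : ℕ) : ℤ) - ((s+1 : ℕ) : ℤ)|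
          = |(t:ℤ) - s| := by
        intro q hq
        rw [blkval b t q hb (mem_range.mp hq)]
        push_cast
        ring_nf
      rw [sum_congr rfl this, sum_const, card_range, nsmul_eq_mul]
    calc ∑ s ∈ range m, ∑ r ∈ range b, ∑ j ∈ range (m*b),
            |(((j + b)/b : ℕ) : ℤ) - (((s*b + r + b)/b : ℕ) : ℤ)|
        = ∑ s ∈ range m, ∑ r ∈ range b, (b:ℤ) * ∑ t ∈ range m, |(t:ℤ) - s| := by
          exact sum_congr rfl fun s hs => sum_congr rfl fun r hr => inner s r hs hr
      _ = (b:ℤ)^2 * ∑ s ∈ range m, ∑ t ∈ range m, |(s:ℤ) - t| := by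
          simp only [sum_const, card_range, nsmul_eq_mul, Finset.mul_sum]
          refine sum_congr rfl fun s _ => ?_
          refine sum_congr rfl fun t _ => ?_
          rw [abs_sub_comm]
          ring
  rw [← key]
  simp only [blk]
  rw [Fin.sum_univ_eq_sum_range (fun i => ∑ j : Fin (m*b), |((((j:ℕ) + b)/b : ℕ) : ℤ) - (((i + b)/b : ℕ) : ℤ)|)]
  refine sum_congr rfl fun i _ => ?_
  rw [Fin.sum_univ_eq_sum_range (fun j => |(((j + b)/b : ℕ) : ℤ) - (((i + b)/b : ℕ) : ℤ)|)]

lemma sum_perm_apply {n : ℕ} (g : Fin n → ℤ) (i : Fin n) :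
    ∑ π : Equiv.Perm (Fin n), g (π i) = (n-1).factorial • ∑ j, g j := by
  cases n with
  | zero => exact i.elim0
  | succ k =>
    have h1 : ∑ π : Equiv.Perm (Fin (k+1)), g (π i)
        = ∑ π : Equiv.Perm (Fin (k+1)), g (π 0) := by
      refine Fintype.sum_bijective (· * Equiv.swap 0 i)
        (Group.mulRight_bijective _) _ _ (fun π => ?_)
      simp
    rw [h1, ← (Equiv.Perm.decomposeFin (n := k)).symm.sum_comp]
    simp [Fintype.sum_prod_type, Finset.sum_const, Fintype.card_perm]
    rw [← Finset.mul_sum]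

theorem expected_dESP_uniform (n b : ℕ) (hb : 0 < b) (hn : 0 < n) (hbn : b ∣ n) :
    (∑ π : Equiv.Perm (Fin n), (dESP b π 1 : ℝ)) / n.factorial =
      ((n : ℝ) ^ 2 - (b : ℝ) ^ 2) / (3 * b) := by
  obtain ⟨m, hm⟩ := hbn
  have hnm : n = m * b := by rw [hm, Nat.mul_comm]
  set T : ℤ := ∑ s ∈ range m, ∑ t ∈ range m, |(s:ℤ) - t| with hT
  have hsum : (∑ π : Equiv.Perm (Fin n), dESP b π 1) = (n-1).factorial • ((b:ℤ)^2 * T) := by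
    unfold dESP
    rw [Finset.sum_comm]
    have step : ∀ i : Fin n,
        ∑ π : Equiv.Perm (Fin n), |(blk b (π i) : ℤ) - (blk b ((1 : Equiv.Perm (Fin n)) i) : ℤ)|
          = (n-1).factorial • ∑ j : Fin n, |(blk b j : ℤ) - (blk b i : ℤ)| := by
      intro i
      simp only [Equiv.Perm.one_apply]
      exact sum_perm_apply (fun j => |(blk b j : ℤ) - (blk b i : ℤ)|) i
    rw [Finset.sum_congr rfl fun i _ => step i, ← Finset.smul_sum, Ssum b m hb hnm]
  have hcast : (∑ π : Equiv.Perm (Fin n), (dESP b π 1 : ℝ))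
      = ((∑ π : Equiv.Perm (Fin n), dESP b π 1 : ℤ) : ℝ) := by push_cast; rfl
  have hfact : (n.factorial : ℝ) = n * (n-1).factorial := by
    exact_mod_cast (congrArg (Nat.cast : ℕ → ℝ) (Nat.mul_factorial_pred hn.ne')).symm
  have h3 : 3 * ((T:ℤ):ℝ) = (m:ℝ)^3 - m := by
    have h := congrArg (fun z : ℤ => (z : ℝ)) (absT m)
    rw [← hT] at h
    push_cast at h
    linarith [h]
  have hmn : (n:ℝ) = m * b := by exact_mod_cast hnm
  have hn0 : (n:ℝ) ≠ 0 := Nat.cast_ne_zero.mpr hn.ne'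
  have hb0 : (b:ℝ) ≠ 0 := Nat.cast_ne_zero.mpr hb.ne'
  have hf0 : ((n-1).factorial : ℝ) ≠ 0 := Nat.cast_ne_zero.mpr (Nat.factorial_ne_zero _)
  rw [hcast, hsum, hfact]
  push_cast [nsmul_eq_mul]
  rw [div_eq_div_iff (by positivity) (by positivity)]
  linear_combination ((n-1).factorial : ℝ) * ((b:ℝ)^3 * h3
    + ((b:ℝ)^2 - (n:ℝ)^2 - (n:ℝ)*(b:ℝ)*(m:ℝ) - (b:ℝ)^2*(m:ℝ)^2) * (hmn))
end

section
/- Let b divide n and suppose a permutation π ∈ S_n is obtained from the identity by reversing the order within each block of b consecutive positions. Then d_esp(π, id) = 0, while the ordinary Spearman's footrule d_sp(π, id) = Σ_{i=1}^n |π(i) − i| equals (n/b)·Σ_{j=1}^{b}|b+1−2j|, which equals n·b/2 when b is even and n(b²−1)/(2b) when b is odd. In particular d_esp(π,id) = 0 but d_sp(π,id) > 0 for b ≥ 2, so d_esp and d_sp are not proportional. -/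
/-- Ordinary Spearman's footrule metric. -/
def dSP {n : ℕ} (π δ : Equiv.Perm (Fin n)) : ℤ :=
  ∑ i : Fin n, |((π i).val : ℤ) - ((δ i).val : ℤ)|

lemma sum_abs_block : ∀ b : ℕ,
    2 * ∑ j ∈ Finset.range b, |(b : ℤ) - 1 - 2 * (j : ℤ)| = (b : ℤ) * b - (b : ℤ) % 2
  | 0 => by simp
  | 1 => by simp
  | (b + 2) => by
    have ih := sum_abs_block b
    rw [Finset.sum_range_succ, Finset.sum_range_succ']
    have h1 : ∀ j ∈ Finset.range b,
        |((b + 2 : ℕ) : ℤ) - 1 - 2 * ((j + 1 : ℕ) : ℤ)| = |(b : ℤ) - 1 - 2 * (j : ℤ)| := by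
      intro j _
      congr 1
      push_cast
      ring
    rw [Finset.sum_congr rfl h1]
    have h2 : |((b + 2 : ℕ) : ℤ) - 1 - 2 * ((0 : ℕ) : ℤ)| = (b : ℤ) + 1 := by
      rw [abs_of_nonneg] <;> push_cast <;> omega
    have h3 : |((b + 2 : ℕ) : ℤ) - 1 - 2 * ((b + 1 : ℕ) : ℤ)| = (b : ℤ) + 1 := by
      rw [abs_of_nonpos] <;> push_cast <;> omega
    rw [h2, h3]
    have hmod : (((b : ℕ) + 2 : ℕ) : ℤ) % 2 = (b : ℤ) % 2 := by push_cast; omega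
    push_cast at ih ⊢
    rw [show ((b : ℤ) + 2) % 2 = (b : ℤ) % 2 by omega]
    linear_combination ih

lemma sum_mod_blocks (b : ℕ) (f : ℕ → ℤ) : ∀ m : ℕ,
    ∑ i ∈ Finset.range (b * m), f (i % b) = m * ∑ j ∈ Finset.range b, f j
  | 0 => by simp
  | (m + 1) => by
    have ih := sum_mod_blocks b f m
    have h : b * (m + 1) = b * m + b := by ring
    rw [h, Finset.sum_range_add, ih]
    have h1 : ∀ j ∈ Finset.range b, f ((b * m + j) % b) = f j := by
      intro j hj
      simp only [Finset.mem_range] at hj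
      rw [Nat.mul_add_mod, Nat.mod_eq_of_lt hj]
    rw [Finset.sum_congr rfl h1]
    push_cast
    ring

theorem block_reversal_esp_zero_sp_pos (n b : ℕ) (hb : 0 < b) (hn : 0 < n)
    (hbn : b ∣ n) (π : Equiv.Perm (Fin n))
    (hπ : ∀ i : Fin n, (π i).val = (i.val / b) * b + (b - 1 - i.val % b)) :
    dESP b π 1 = 0 ∧
    (dSP π 1 : ℚ) =
      (if Even b then (n : ℚ) * b / 2 else (n : ℚ) * ((b : ℚ) ^ 2 - 1) / (2 * b)) ∧
    (2 ≤ b → 0 < dSP π 1) := by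
  obtain ⟨m, hm⟩ := hbn
  have hmpos : 0 < m := by
    rcases Nat.eq_zero_or_pos m with h | h
    · subst h; simp at hm; omega
    · exact h
  -- the block of π i equals the block of i
  have hdiv : ∀ i : Fin n, (π i).val / b = i.val / b := by
    intro i
    rw [hπ i]
    have h1 : b - 1 - i.val % b < b := by omega
    rw [Nat.mul_comm (i.val / b) b, Nat.mul_add_div hb, Nat.div_eq_of_lt h1, Nat.add_zero]
  -- dESP = 0
  have hesp : dESP b π 1 = 0 := by
    unfold dESP
    apply Finset.sum_eq_zero
    intro i _
    have h1 : blk b (π i) = blk b ((1 : Equiv.Perm (Fin n)) i) := by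
      simp only [Equiv.Perm.one_apply, blk]
      rw [Nat.add_div_right _ hb, Nat.add_div_right _ hb, hdiv i]
    rw [h1, sub_self, abs_zero]
  -- termwise form of dSP
  have hterm : ∀ i : Fin n,
      |((π i).val : ℤ) - (((1 : Equiv.Perm (Fin n)) i).val : ℤ)|
        = |(b : ℤ) - 1 - 2 * ((i.val % b : ℕ) : ℤ)| := by
    intro i
    simp only [Equiv.Perm.one_apply]
    rw [hπ i]
    have hlt : i.val % b < b := Nat.mod_lt _ hb
    have hdm : (((i.val % b : ℕ)) : ℤ) + (b : ℤ) * ((i.val / b : ℕ) : ℤ) = (i.val : ℤ) := by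
      exact_mod_cast congrArg (fun k : ℕ => (k : ℤ)) (Nat.mod_add_div i.val b)
    congr 1
    push_cast at hdm
    push_cast [Nat.cast_sub (show i.val % b ≤ b - 1 by omega),
      Nat.cast_sub (show 1 ≤ b by omega)]
    linarith
  have hsp : 2 * dSP π 1 = (m : ℤ) * ((b : ℤ) * b - (b : ℤ) % 2) := by
    unfold dSP
    rw [Finset.sum_congr rfl (fun i _ => hterm i)]
    have h1 : ∑ i : Fin n, |(b : ℤ) - 1 - 2 * ((i.val % b : ℕ) : ℤ)|
        = ∑ i ∈ Finset.range n, |(b : ℤ) - 1 - 2 * ((i % b : ℕ) : ℤ)| :=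
      Fin.sum_univ_eq_sum_range (fun i : ℕ => |(b : ℤ) - 1 - 2 * ((i % b : ℕ) : ℤ)|) n
    rw [h1, hm, sum_mod_blocks b (fun j : ℕ => |(b : ℤ) - 1 - 2 * (j : ℤ)|) m,
      mul_left_comm, sum_abs_block b]
  refine ⟨hesp, ?_, ?_⟩
  · -- the rational identity
    have hnq : (n : ℚ) = (b : ℚ) * m := by rw [hm]; push_cast; ring
    have hbq : (b : ℚ) ≠ 0 := by positivity
    by_cases he : Even b
    · have h0 : (b : ℤ) % 2 = 0 := Int.even_iff.mp (by exact_mod_cast he)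
      rw [h0, sub_zero] at hsp
      have hc : 2 * (dSP π 1 : ℚ) = (m : ℚ) * ((b : ℚ) * b) := by
        exact_mod_cast congrArg (fun z : ℤ => (z : ℚ)) hsp
      rw [if_pos he, hnq]
      field_simp
      linarith
    · have h0 : (b : ℤ) % 2 = 1 := Int.odd_iff.mp (by
        exact_mod_cast Nat.odd_iff.mpr (Nat.not_even_iff.mp he))
      rw [h0] at hsp
      have hc : 2 * (dSP π 1 : ℚ) = (m : ℚ) * ((b : ℚ) * b - 1) := by
        exact_mod_cast congrArg (fun z : ℤ => (z : ℚ)) hsp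
      rw [if_neg he, hnq]
      field_simp
      ring_nf
      ring_nf at hc
      nlinarith [hc]
  · -- positivity
    intro h2
    have h1 : (1 : ℤ) ≤ (m : ℤ) := by exact_mod_cast hmpos
    have hb2 : (2 : ℤ) ≤ (b : ℤ) := by exact_mod_cast h2
    have hmod : (b : ℤ) % 2 < 2 := Int.emod_lt_of_pos _ (by norm_num)
    have hmod0 : 0 ≤ (b : ℤ) % 2 := Int.emod_nonneg _ (by norm_num)
    have hX : (3 : ℤ) ≤ (b : ℤ) * b - (b : ℤ) % 2 := by nlinarith
    have h3 : (1 : ℤ) * 3 ≤ (m : ℤ) * ((b : ℤ) * b - (b : ℤ) % 2) :=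
      mul_le_mul h1 hX (by norm_num) (by linarith)
    linarith [hsp]
end
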